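/- Fix $c > 1$ and let $r(u,v) = \sqrt{(v-u)^2 + 4cuv}$ and $h(u,v) = \frac{2cu + (v-u) - r(u,v)}{u}$ for $u, v \in (0,1)$. Then $\frac{\partial}{\partial u} \ln h(u,v) = \frac{v}{u\, r(u,v)}$ and $\frac{\partial}{\partial u} \ln h(v,u) = -\frac{1}{r(u,v)}$. -/

import Mathlib

/-!
Differentiating `rLD` gives `∂ᵤ r = (u - v + 2cv) / r`, and with `r² = (v - u)² + 4cuv` the
logarithmic derivatives of `hLD` collapse to the stated closed forms. The logarithms are those of
positive numbers because `r < 2cu + (v - u)`: the difference of squares is `4c(c - 1)u² > 0`.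
-/

noncomputable def rLD (c u v : ℝ) : ℝ := Real.sqrt ((v - u) ^ 2 + 4 * c * u * v)

noncomputable def hLD (c u v : ℝ) : ℝ := (2 * c * u + (v - u) - rLD c u v) / u

section

variable {c u v : ℝ}

lemma rLD_comm (c u v : ℝ) : rLD c u v = rLD c v u := by
  unfold rLD
  ring_nf

lemma rLD_pos (hc : 0 < c) (hu : 0 < u) (hv : 0 < v) : 0 < rLD c u v :=
  Real.sqrt_pos.mpr (by positivity)

lemma rLD_sq (hr : 0 < rLD c u v) : rLD c u v ^ 2 = (v - u) ^ 2 + 4 * c * u * v :=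
  Real.sq_sqrt (Real.sqrt_pos.mp hr).le

lemma rLD_lt (hc : 1 < c) (hu : 0 < u) (hv : 0 < v) : rLD c u v < 2 * c * u + (v - u) := by
  have hsum : 0 < 2 * c * u + (v - u) := by nlinarith
  refine (Real.sqrt_lt' hsum).mpr ?_
  nlinarith [mul_pos (mul_pos hu hu) (sub_pos.mpr hc)]

lemma hLD_pos (hc : 1 < c) (hu : 0 < u) (hv : 0 < v) : 0 < hLD c u v :=
  div_pos (sub_pos.mpr (rLD_lt hc hu hv)) hu

lemma hasDerivAt_rLD_fst (hr : 0 < rLD c u v) :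
    HasDerivAt (fun u' => rLD c u' v) ((u - v + 2 * c * v) / rLD c u v) u := by
  have hg : HasDerivAt (fun u' => (v - u') ^ 2 + 4 * c * u' * v) (2 * (u - v + 2 * c * v)) u :=
    ((((hasDerivAt_id' u).const_sub v).pow 2).add
      (((hasDerivAt_id' u).const_mul (4 * c)).mul_const v)).congr_deriv (by ring)
  refine (hg.sqrt (Real.sqrt_pos.mp hr).ne').congr_deriv ?_
  rw [← rLD]
  field_simp

lemma hasDerivAt_rLD_snd (hr : 0 < rLD c u v) :
    HasDerivAt (fun v' => rLD c u v') ((v - u + 2 * c * u) / rLD c u v) v := by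
  simp_rw [rLD_comm c u] at hr ⊢
  exact hasDerivAt_rLD_fst hr

lemma hasDerivAt_hLD_fst (hu : u ≠ 0) (hr : 0 < rLD c u v) :
    HasDerivAt (fun u' => hLD c u' v) (v * hLD c u v / (u * rLD c u v)) u := by
  have hnum := (((hasDerivAt_id' u).const_mul (2 * c)).add ((hasDerivAt_id' u).const_sub v)).sub
    (hasDerivAt_rLD_fst hr)
  refine (hnum.div (hasDerivAt_id' u) hu).congr_deriv ?_
  have hsq := rLD_sq hr
  simp only [hLD, Pi.sub_apply, Pi.add_apply]
  field_simp
  linear_combination hsq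

lemma hasDerivAt_hLD_snd (hr : 0 < rLD c u v) :
    HasDerivAt (fun v' => hLD c u v') (-hLD c u v / rLD c u v) v := by
  have hnum := (((hasDerivAt_id' v).sub_const u).const_add (2 * c * u)).sub
    (hasDerivAt_rLD_snd hr)
  refine (hnum.div_const u).congr_deriv ?_
  unfold hLD
  field_simp
  ring

end

theorem log_hLD_deriv (c u v : ℝ) (hc : 1 < c)
    (hu : u ∈ Set.Ioo (0:ℝ) 1) (hv : v ∈ Set.Ioo (0:ℝ) 1) :
    HasDerivAt (fun u' => Real.log (hLD c u' v)) (v / (u * rLD c u v)) u ∧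
    HasDerivAt (fun u' => Real.log (hLD c v u')) (-(1 / rLD c u v)) u := by
  obtain ⟨hu0, -⟩ := hu
  obtain ⟨hv0, -⟩ := hv
  have hr := rLD_pos (zero_lt_one.trans hc) hu0 hv0
  have huv := (hLD_pos hc hu0 hv0).ne'
  have hvu := (hLD_pos hc hv0 hu0).ne'
  constructor
  · convert (hasDerivAt_hLD_fst hu0.ne' hr).log huv using 1
    field_simp
  · rw [rLD_comm] at hr ⊢
    convert (hasDerivAt_hLD_snd hr).log hvu using 1
    field_simp
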